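/- If u ∈ H¹(ℝ^N;ℂ) satisfies ‖∇u‖_{L²} ‖u‖_{L²}^σ ≤ ‖∇Q‖_{L²} ‖Q‖_{L²}^σ, then 8‖∇u‖_{L²}² − (4Nα/(α+2)) ‖u‖_{L^{α+2}}^{α+2} ≥ 8 [ 1 − ( E(u) M(u)^σ / (E(Q) M(Q)^σ) )^{(Nα−4)/4} ] ‖∇u‖_{L²}². -/

import Mathlib

open MeasureTheory Filter

noncomputable section

abbrev Rn (N : ℕ) : Type := EuclideanSpace ℝ (Fin N)

/-- pointwise squared norm of the gradient of a complex-valued function on `ℝ^N` -/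
def gradNormSq (N : ℕ) (u : Rn N → ℂ) (x : Rn N) : ℝ :=
  ∑ i : Fin N, ‖fderiv ℝ u x (EuclideanSpace.single i 1)‖ ^ 2

/-- the `L²` norm of the gradient, `‖∇u‖_{L²}` -/
def gradL2 (N : ℕ) (u : Rn N → ℂ) : ℝ := Real.sqrt (∫ x, gradNormSq N u x)

/-- the mass `M(u) = ∫ |u|²` -/
def massM (N : ℕ) (u : Rn N → ℂ) : ℝ := ∫ x, ‖u x‖ ^ 2

/-- the `L²` norm -/
def l2norm (N : ℕ) (u : Rn N → ℂ) : ℝ := Real.sqrt (massM N u)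

/-- the `L^p` norm -/
def lpnorm (N : ℕ) (p : ℝ) (u : Rn N → ℂ) : ℝ := (∫ x, ‖u x‖ ^ p) ^ (1 / p)

/-- the energy `E(u) = ½∫|∇u|² − (1/(α+2))∫|u|^{α+2}` -/
def energyE (N : ℕ) (α : ℝ) (u : Rn N → ℂ) : ℝ :=
  (1 / 2) * (∫ x, gradNormSq N u x) - (1 / (α + 2)) * ∫ x, ‖u x‖ ^ (α + 2)

/-- membership in `H¹(ℝ^N;ℂ)` (with the finiteness of the `L^{α+2}` norm,
which follows from the Sobolev embedding) -/
def InH1 (N : ℕ) (α : ℝ) (u : Rn N → ℂ) : Prop :=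
  Differentiable ℝ u ∧ Integrable (fun x => ‖u x‖ ^ 2) ∧
    Integrable (gradNormSq N u) ∧ Integrable fun x : Rn N => ‖u x‖ ^ (α + 2)

/-!
With `n = Nα`, `β = 4 - (N - 2)α` and `s = (n - 4)/4`, the quantity `K(u) = ‖∇u‖² M(u)^σ` is
scale invariant, and `M^{β/4} ‖∇u‖^{n/2} = ‖∇u‖² K^s`. The Pohozaev identities identify
`C_GN K(Q)^s = 2(α+2)/n`, so Gagliardo–Nirenberg reads
`∫|u|^{α+2} ≤ (2(α+2)/n) ‖∇u‖² (K(u)/K(Q))^s`. When `K(u) ≤ K(Q)` this gives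
`E(u) M(u)^σ ≥ ((n-4)/(2n)) K(u)`, with equality for `Q`; so `K(u)/K(Q)` is at most the energy
ratio, and the same Gagliardo–Nirenberg bound controls the potential term of the virial quantity.
-/

lemma massM_nonneg (N : ℕ) (u : Rn N → ℂ) : 0 ≤ massM N u :=
  integral_nonneg fun _ => by positivity

lemma gradL2_sq (N : ℕ) (u : Rn N → ℂ) : gradL2 N u ^ 2 = ∫ x, gradNormSq N u x :=
  Real.sq_sqrt <| integral_nonneg fun _ => Finset.sum_nonneg fun _ _ => by positivity

lemma lpnorm_rpow (N : ℕ) {p : ℝ} (hp : p ≠ 0) (u : Rn N → ℂ) :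
    lpnorm N p u ^ p = ∫ x, ‖u x‖ ^ p := by
  rw [lpnorm, ← Real.rpow_mul (integral_nonneg fun _ => by positivity), one_div_mul_cancel hp,
    Real.rpow_one]

lemma l2norm_rpow (N : ℕ) (u : Rn N → ℂ) (s : ℝ) : l2norm N u ^ s = massM N u ^ (s / 2) := by
  rw [l2norm, Real.sqrt_eq_rpow, ← Real.rpow_mul (massM_nonneg N u)]
  ring_nf

lemma gradL2_mul_l2norm_rpow_sq (N : ℕ) (u : Rn N → ℂ) (σ : ℝ) :
    (gradL2 N u * l2norm N u ^ σ) ^ 2 = gradL2 N u ^ 2 * massM N u ^ σ := by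
  rw [mul_pow, l2norm_rpow, ← Real.rpow_mul_natCast (massM_nonneg N u)]
  ring_nf

lemma energyE_eq (N : ℕ) {α : ℝ} (hα : α + 2 ≠ 0) (u : Rn N → ℂ) :
    energyE N α u = gradL2 N u ^ 2 / 2 - lpnorm N (α + 2) u ^ (α + 2) / (α + 2) := by
  rw [energyE, gradL2_sq, lpnorm_rpow N hα]
  ring

lemma four_sub_mul_pos {N : ℕ} {α : ℝ} (hα : 0 < α) (hα₂ : 3 ≤ N → α < 4 / ((N : ℝ) - 2)) :
    0 < 4 - ((N : ℝ) - 2) * α := by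
  rcases le_or_gt 3 N with hN | hN
  · have hN' : (0 : ℝ) < N - 2 := by
      have : (3 : ℝ) ≤ N := by exact_mod_cast hN
      linarith
    have := (lt_div_iff₀ hN').1 (hα₂ hN)
    linarith
  · have : (N : ℝ) ≤ 2 := by exact_mod_cast Nat.lt_succ_iff.mp hN
    nlinarith

section Scaling

variable {n β σ p a m b mq C P PQ E EQ : ℝ}

lemma rpow_mul_rpow_eq_sq_mul_rpow (hσ : σ * (n - 4) = β) (hn : 4 < n)
    (ha : 0 ≤ a) (hm : 0 ≤ m) :
    m ^ (β / 4) * a ^ (n / 2) = a ^ 2 * (a ^ 2 * m ^ σ) ^ ((n - 4) / 4) := by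
  rw [Real.mul_rpow (by positivity) (by positivity), ← Real.rpow_natCast_mul ha,
    ← Real.rpow_mul hm, ← hσ, ← mul_assoc, ← Real.rpow_natCast,
    ← Real.rpow_add' ha (by push_cast; linarith)]
  ring_nf

lemma gn_const_mul_rpow_eq (hσ : σ * (n - 4) = β) (hn : 4 < n) (hβ : 0 < β)
    (hb : 0 ≤ b) (hmq : 0 < mq)
    (hC : C = PQ / (mq ^ (β / 4) * b ^ (n / 2)))
    (hP₁ : mq = β / n * b ^ 2) (hP₂ : mq = β / (2 * p) * PQ) :
    C * (b ^ 2 * mq ^ σ) ^ ((n - 4) / 4) = 2 * p / n := by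
  have hp : p ≠ 0 := by rintro rfl; simp at hP₂; linarith
  have hb₀ : b ≠ 0 := by rintro rfl; simp at hP₁; linarith
  rw [hC, rpow_mul_rpow_eq_sq_mul_rpow hσ hn hb hmq.le]
  field_simp
  field_simp at hP₁ hP₂
  apply mul_left_cancel₀ hβ.ne'
  linear_combination -n * hP₂ + 2 * p * hP₁

lemma ground_energy_eq (hn : 0 < n) (hβ : 0 < β) (hp : p ≠ 0)
    (hP₁ : mq = β / n * b ^ 2) (hP₂ : mq = β / (2 * p) * PQ) :
    b ^ 2 / 2 - PQ / p = (n - 4) / (2 * n) * b ^ 2 := by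
  field_simp
  field_simp at hP₁ hP₂
  apply mul_left_cancel₀ hβ.ne'
  linear_combination 2 * n * hP₂ - 4 * p * hP₁

lemma gn_bound_scaled (hσ : σ * (n - 4) = β) (hn : 4 < n) (ha : 0 ≤ a) (hm : 0 ≤ m)
    (hKQ : 0 < b ^ 2 * mq ^ σ)
    (hCQ : C * (b ^ 2 * mq ^ σ) ^ ((n - 4) / 4) = 2 * p / n)
    (hGN : P ≤ C * m ^ (β / 4) * a ^ (n / 2)) :
    P ≤ 2 * p / n * a ^ 2 * (a ^ 2 * m ^ σ / (b ^ 2 * mq ^ σ)) ^ ((n - 4) / 4) := by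
  have hKQs : (b ^ 2 * mq ^ σ) ^ ((n - 4) / 4) ≠ 0 := by positivity
  rw [mul_assoc, rpow_mul_rpow_eq_sq_mul_rpow hσ hn ha hm] at hGN
  rw [Real.div_rpow (by positivity) hKQ.le, ← hCQ]
  field_simp
  linarith

lemma virial_bound_of_gn (hσ : σ * (n - 4) = β) (hn : 4 < n) (hp : 0 < p)
    (ha : 0 ≤ a) (hm : 0 ≤ m) (hKQ : 0 < b ^ 2 * mq ^ σ)
    (hCQ : C * (b ^ 2 * mq ^ σ) ^ ((n - 4) / 4) = 2 * p / n)
    (hGN : P ≤ C * m ^ (β / 4) * a ^ (n / 2))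
    (hE : E = a ^ 2 / 2 - P / p) (hEQ : EQ = (n - 4) / (2 * n) * b ^ 2)
    (hle : a ^ 2 * m ^ σ ≤ b ^ 2 * mq ^ σ) :
    8 * (1 - (E * m ^ σ / (EQ * mq ^ σ)) ^ ((n - 4) / 4)) * a ^ 2 ≤
      8 * a ^ 2 - 4 * n / p * P := by
  set K := a ^ 2 * m ^ σ
  set KQ := b ^ 2 * mq ^ σ
  set t := K / KQ
  have hs : 0 ≤ (n - 4) / 4 := by linarith
  have hGN' : P ≤ 2 * p / n * a ^ 2 * t ^ ((n - 4) / 4) :=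
    gn_bound_scaled hσ hn ha hm hKQ hCQ hGN
  have ht₀ : 0 ≤ t := by positivity
  have hts : t ^ ((n - 4) / 4) ≤ 1 := Real.rpow_le_one ht₀ ((div_le_one hKQ).2 hle) hs
  have hPm : P * m ^ σ ≤ 2 * p / n * K := by
    calc P * m ^ σ ≤ 2 * p / n * a ^ 2 * t ^ ((n - 4) / 4) * m ^ σ := by gcongr
      _ ≤ 2 * p / n * a ^ 2 * 1 * m ^ σ := by gcongr
      _ = 2 * p / n * K := by ring
  have hEm : (n - 4) / (2 * n) * K ≤ E * m ^ σ := by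
    have : P * m ^ σ / p ≤ 2 / n * K := by
      rw [div_le_iff₀ hp]; linarith [show 2 / n * K * p = 2 * p / n * K by ring]
    calc (n - 4) / (2 * n) * K = K / 2 - 2 / n * K := by field_simp; ring
      _ ≤ K / 2 - P * m ^ σ / p := by linarith
      _ = E * m ^ σ := by rw [hE]; ring
  have htR : t ≤ E * m ^ σ / (EQ * mq ^ σ) := by
    rw [hEQ, mul_assoc, le_div_iff₀ (by positivity), ← mul_assoc, mul_comm t,
      mul_assoc, div_mul_cancel₀ K hKQ.ne']
    exact hEm
  have h₁ : 4 * n / p * P ≤ 8 * a ^ 2 * t ^ ((n - 4) / 4) := by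
    calc 4 * n / p * P ≤ 4 * n / p * (2 * p / n * a ^ 2 * t ^ ((n - 4) / 4)) := by gcongr
      _ = 8 * a ^ 2 * t ^ ((n - 4) / 4) := by field_simp; ring
  have h₂ := mul_le_mul_of_nonneg_left (Real.rpow_le_rpow ht₀ htR hs)
    (by positivity : (0 : ℝ) ≤ 8 * a ^ 2)
  linarith

end Scaling

theorem virial_quantity_lower_bound_general
    (N : ℕ) (hN : 1 ≤ N) (α : ℝ) (hα₁ : 4 / (N : ℝ) < α)
    (hα₂ : 3 ≤ N → α < 4 / ((N : ℝ) - 2))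
    (σ : ℝ) (hσ : σ = (4 - ((N : ℝ) - 2) * α) / ((N : ℝ) * α - 4))
    (Q : Rn N → ℂ) (hQpos : 0 < massM N Q)
    (CGN : ℝ)
    (hCGN : CGN = lpnorm N (α + 2) Q ^ (α + 2) /
      (l2norm N Q ^ ((4 - ((N : ℝ) - 2) * α) / 2) * gradL2 N Q ^ ((N : ℝ) * α / 2)))
    (hGN : ∀ f : Rn N → ℂ, InH1 N α f →
      lpnorm N (α + 2) f ^ (α + 2) ≤
        CGN * l2norm N f ^ ((4 - ((N : ℝ) - 2) * α) / 2) * gradL2 N f ^ ((N : ℝ) * α / 2))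
    (hPoho₁ : massM N Q = ((4 - ((N : ℝ) - 2) * α) / ((N : ℝ) * α)) * gradL2 N Q ^ 2)
    (hPoho₂ : massM N Q =
      ((4 - ((N : ℝ) - 2) * α) / (2 * (α + 2))) * lpnorm N (α + 2) Q ^ (α + 2))
    (u : Rn N → ℂ) (hu : InH1 N α u)
    (hle : gradL2 N u * l2norm N u ^ σ ≤ gradL2 N Q * l2norm N Q ^ σ) :
    8 * gradL2 N u ^ 2 - (4 * (N : ℝ) * α / (α + 2)) * lpnorm N (α + 2) u ^ (α + 2) ≥
      8 * (1 - (energyE N α u * massM N u ^ σ / (energyE N α Q * massM N Q ^ σ)) ^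
          (((N : ℝ) * α - 4) / 4)) * gradL2 N u ^ 2 := by
  have hN₀ : (0 : ℝ) < N := by exact_mod_cast hN
  have hα : 0 < α := (div_pos four_pos hN₀).trans hα₁
  have hp : 0 < α + 2 := by linarith
  have hn : 4 < (N : ℝ) * α := (div_lt_iff₀' hN₀).1 hα₁
  have hβ := four_sub_mul_pos hα hα₂
  have hσβ : σ * ((N : ℝ) * α - 4) = 4 - ((N : ℝ) - 2) * α := by
    rw [hσ, div_mul_cancel₀ _ (by linarith)]
  have hquarter : (4 - ((N : ℝ) - 2) * α) / 2 / 2 = (4 - ((N : ℝ) - 2) * α) / 4 := by ring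
  rw [l2norm_rpow, hquarter] at hCGN
  have hGNu := hGN u hu
  rw [l2norm_rpow, hquarter] at hGNu
  have hKQ : 0 < gradL2 N Q ^ 2 * massM N Q ^ σ := by
    have : 0 < gradL2 N Q ^ 2 := by
      by_contra h
      rw [le_antisymm (not_lt.1 h) (sq_nonneg _), mul_zero] at hPoho₁
      linarith
    positivity
  have hle' : gradL2 N u ^ 2 * massM N u ^ σ ≤ gradL2 N Q ^ 2 * massM N Q ^ σ := by
    rw [← gradL2_mul_l2norm_rpow_sq, ← gradL2_mul_l2norm_rpow_sq]
    exact pow_le_pow_left₀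
      (mul_nonneg (Real.sqrt_nonneg _) (Real.rpow_nonneg (Real.sqrt_nonneg _) _)) hle 2
  rw [ge_iff_le, mul_assoc 4 (N : ℝ) α]
  exact virial_bound_of_gn hσβ hn hp (Real.sqrt_nonneg _) (massM_nonneg N u) hKQ
    (gn_const_mul_rpow_eq hσβ hn hβ (Real.sqrt_nonneg _) hQpos hCGN hPoho₁ hPoho₂) hGNu
    (energyE_eq N hp.ne' u)
    ((energyE_eq N hp.ne' Q).trans (ground_energy_eq (by linarith) hβ hp.ne' hPoho₁ hPoho₂))
    hle'

theorem virial_quantity_lower_bound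
    (N : ℕ) (hN : 1 ≤ N) (α : ℝ) (hα₁ : 4 / (N : ℝ) < α)
    (hα₂ : 3 ≤ N → α < 4 / ((N : ℝ) - 2))
    (σ : ℝ) (hσ : σ = (4 - ((N : ℝ) - 2) * α) / ((N : ℝ) * α - 4))
    (Q : Rn N → ℂ) (hQH1 : InH1 N α Q) (hQpos : 0 < massM N Q)
    (CGN : ℝ)
    (hCGN : CGN = lpnorm N (α + 2) Q ^ (α + 2) /
      (l2norm N Q ^ ((4 - ((N : ℝ) - 2) * α) / 2) * gradL2 N Q ^ ((N : ℝ) * α / 2)))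
    (hGN : ∀ f : Rn N → ℂ, InH1 N α f →
      lpnorm N (α + 2) f ^ (α + 2) ≤
        CGN * l2norm N f ^ ((4 - ((N : ℝ) - 2) * α) / 2) * gradL2 N f ^ ((N : ℝ) * α / 2))
    (hPoho₁ : massM N Q = ((4 - ((N : ℝ) - 2) * α) / ((N : ℝ) * α)) * gradL2 N Q ^ 2)
    (hPoho₂ : massM N Q =
      ((4 - ((N : ℝ) - 2) * α) / (2 * (α + 2))) * lpnorm N (α + 2) Q ^ (α + 2))
    (u : Rn N → ℂ) (hu : InH1 N α u)
    (hle : gradL2 N u * l2norm N u ^ σ ≤ gradL2 N Q * l2norm N Q ^ σ) :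
    8 * gradL2 N u ^ 2 - (4 * (N : ℝ) * α / (α + 2)) * lpnorm N (α + 2) u ^ (α + 2) ≥
      8 * (1 - (energyE N α u * massM N u ^ σ / (energyE N α Q * massM N Q ^ σ)) ^
          (((N : ℝ) * α - 4) / 4)) * gradL2 N u ^ 2 :=
  virial_quantity_lower_bound_general N hN α hα₁ hα₂ σ hσ Q hQpos CGN hCGN hGN hPoho₁ hPoho₂ u hu
    hle
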